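/- arXiv:1404.1581 — 5 statements merged into one kernel-verified Lean document; each statement's English description precedes it below -/
import Mathlib

section
/- If G is a group and N is a normal subgroup of G of finite index such that N is Jordan, then G is Jordan. -/
/-- A group `G` is Jordan with constant `J` if every finite subgroup of `G`
contains a normal abelian subgroup of index at most `J`. -/
def IsJordanWith (J : ℕ) (G : Type*) [Group G] : Prop :=
  ∀ H : Subgroup G, Finite H →
    ∃ A : Subgroup H, A.Normal ∧ (∀ a b : A, a * b = b * a) ∧ A.index ≤ J

/-- A group is Jordan if it is Jordan with some positive constant. -/
def IsJordanGroup (G : Type*) [Group G] : Prop := ∃ J : ℕ, 0 < J ∧ IsJordanWith J G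

/-!
Let `H` be a finite subgroup of `G`. Its subgroup `H ⊓ N` has index at most `[G : N]` in `H`
and is a finite subgroup of `N`, so it contains an abelian subgroup `A` of index at most `J`.
Then `A` has index at most `n := J [G : N]` in `H`, and the normal core of `A` in `H`, the kernel
of the action of `H` on `H ⧸ A`, is a normal abelian subgroup of index at most `n!`.
-/

theorem Subgroup.index_normalCore_dvd_factorial {G : Type*} [Group G] (H : Subgroup G)
    [H.FiniteIndex] : H.normalCore.index ∣ H.index.factorial := by
  rw [normalCore_eq_ker, index_ker, index_eq_card, ← Nat.card_perm]
  exact card_subgroup_dvd_card _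

namespace IsJordanWith

open Subgroup

variable {J : ℕ} {G : Type*} [Group G]

theorem exists_isMulCommutative_relIndex_le (hG : IsJordanWith J G) (H : Subgroup G)
    [Finite H] : ∃ A ≤ H, IsMulCommutative A ∧ A.relIndex H ≤ J := by
  obtain ⟨A, -, hA, hAJ⟩ := hG H inferInstance
  have : IsMulCommutative A := isMulCommutative_iff.mpr hA
  refine ⟨A.map H.subtype, map_subtype_le A, inferInstance, ?_⟩
  rwa [relIndex, ← comap_subtype, comap_map_eq_self_of_injective H.subtype_injective]

theorem exists_isMulCommutative_relIndex_le_mul_index {N : Subgroup G} (hN : N.index ≠ 0)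
    (hJ : IsJordanWith J N) (H : Subgroup G) [Finite H] :
    ∃ A ≤ H, IsMulCommutative A ∧ A.relIndex H ≤ J * N.index := by
  have : Finite (H.subgroupOf N) :=
    Finite.of_injective (fun x => (⟨x.1, x.2⟩ : H)) fun _ _ hxy =>
      Subtype.val_injective (Subtype.val_injective (congrArg ((↑) : H → G) hxy))
  obtain ⟨A, hAK, hA, hAJ⟩ := hJ.exists_isMulCommutative_relIndex_le (H.subgroupOf N)
  have hmap : (H.subgroupOf N).map N.subtype = H ⊓ N := subgroupOf_map_subtype H N
  have hAN : A.map N.subtype ≤ H ⊓ N := hmap ▸ map_mono hAK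
  have hrelA : (A.map N.subtype).relIndex (H ⊓ N) = A.relIndex (H.subgroupOf N) := by
    rw [← hmap, relIndex_map_map_of_injective _ _ N.subtype_injective]
  have hrelN : (H ⊓ N).relIndex H ≤ N.index := by
    rw [inf_relIndex_left, ← relIndex_top_right]
    exact relIndex_le_of_le_right le_top (by rwa [relIndex_top_right])
  refine ⟨A.map N.subtype, hAN.trans inf_le_left, inferInstance, ?_⟩
  rw [← relIndex_mul_relIndex _ _ _ hAN inf_le_left, hrelA]
  exact Nat.mul_le_mul hAJ hrelN

theorem of_forall_exists_relIndex_le {n : ℕ}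
    (h : ∀ H : Subgroup G, Finite H → ∃ A ≤ H, IsMulCommutative A ∧ A.relIndex H ≤ n) :
    IsJordanWith n.factorial G := by
  intro H hH
  obtain ⟨A, -, hA, hAn⟩ := h H hH
  refine ⟨(A.subgroupOf H).normalCore, normalCore_normal _, fun a b => ?_, ?_⟩
  · exact Subtype.ext <| setLike_mul_comm (normalCore_le _ a.2) (normalCore_le _ b.2)
  · calc (A.subgroupOf H).normalCore.index
        ≤ (A.relIndex H).factorial :=
          Nat.le_of_dvd (Nat.factorial_pos _) (index_normalCore_dvd_factorial _)
      _ ≤ n.factorial := Nat.factorial_le hAn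

end IsJordanWith

theorem isJordan_of_normal_finiteIndex_general {G : Type*} [Group G] (N : Subgroup G)
    (hN : N.index ≠ 0) (h : IsJordanGroup N) : IsJordanGroup G := by
  obtain ⟨J, -, hJ⟩ := h
  exact ⟨(J * N.index).factorial, Nat.factorial_pos _, IsJordanWith.of_forall_exists_relIndex_le
    fun H _ => hJ.exists_isMulCommutative_relIndex_le_mul_index hN H⟩

/-- If `N` is a normal subgroup of finite index in `G` and `N` is Jordan, then `G` is Jordan. -/
theorem isJordan_of_normal_finiteIndex {G : Type*} [Group G] (N : Subgroup G) [N.Normal]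
    (hN : N.index ≠ 0) (h : IsJordanGroup N) : IsJordanGroup G :=
  isJordan_of_normal_finiteIndex_general N hN h
end

section
/- Jordan's theorem: for every n there exists a constant J(n) such that every finite subgroup of GL(n, ℂ) contains a normal abelian subgroup of index at most J(n); in particular GL(n, ℂ) is a Jordan group. -/
/-!
A finite subgroup of the units of a C⋆-algebra `A` (such as `GL(n, ℂ)`) is conjugate to a group
of unitaries (Weyl's unitarian trick). For unitaries `‖⁅u, v⁆ - 1‖ ≤ 2 ‖u - 1‖ ‖v - 1‖`, so in a
finite unitary group the elements within `1/2` of `1` commute: a non-commuting pair `(u, v)` with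
`‖v - 1‖` minimal yields `c = ⁅u, v⁆` closer to `1` than `v`, hence commuting with `v`; then
`vᵏ u v⁻ᵏ = c⁻ᵏ u` stays within `1/2` of `1` for all `k`, while the average of the `c⁻ᵏ u` over a
period of `c` is at distance at least `1` from `1`. These elements are closed under conjugation,
so they generate a normal abelian subgroup; representatives of distinct cosets are `1/2` apart in
the compact set `unitary A`, which bounds the index by a packing number.
-/

open Finset Metric
open scoped NNReal commutatorElement

theorem IsJordanWith.pos {J : ℕ} {G : Type*} [Group G] (h : IsJordanWith J G) : 0 < J := by
  obtain ⟨B, -, -, hB⟩ := h ⊥ inferInstance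
  exact (Nat.pos_of_ne_zero Subgroup.index_ne_zero_of_finite).trans_le hB

/-- Multiplying `∑_{k<M} (cᵏ a - 1)` on the left by `1 - c` kills the terms `cᵏ a` and leaves
`M • (c - 1)`. -/
theorem natCast_le_sum_norm_pow_mul_sub_one {R : Type*} [NormedRing R] [NormedSpace ℝ R]
    {c : R} {M : ℕ} (hcM : c ^ M = 1) (hc : c ≠ 1) (a : R) :
    (M : ℝ) ≤ ∑ k ∈ range M, ‖c ^ k * a - 1‖ := by
  have hgeom : (1 - c) * ∑ k ∈ range M, (c ^ k * a - 1) = M • (c - 1) := by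
    rw [sum_sub_distrib, ← sum_mul, mul_sub, ← mul_assoc, mul_neg_geom_sum, hcM, sub_self,
      zero_mul, sum_const, card_range, mul_smul_comm, mul_one, zero_sub, ← neg_sub c 1, smul_neg,
      neg_neg]
  have hc' : 0 < ‖c - 1‖ := norm_pos_iff.mpr (sub_ne_zero.mpr hc)
  refine le_of_mul_le_mul_right ?_ hc'
  calc (M : ℝ) * ‖c - 1‖ = ‖(1 - c) * ∑ k ∈ range M, (c ^ k * a - 1)‖ := by
        rw [hgeom, RCLike.norm_nsmul ℝ, nsmul_eq_mul]
    _ ≤ ‖1 - c‖ * ‖∑ k ∈ range M, (c ^ k * a - 1)‖ := norm_mul_le _ _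
    _ ≤ ‖c - 1‖ * ∑ k ∈ range M, ‖c ^ k * a - 1‖ := by
        rw [norm_sub_rev]
        gcongr
        exact norm_sum_le _ _
    _ = _ := mul_comm _ _

theorem exists_one_le_norm_pow_mul_sub_one {R : Type*} [NormedRing R] [NormedSpace ℝ R]
    {c : R} {M : ℕ} (hM : 0 < M) (hcM : c ^ M = 1) (hc : c ≠ 1) (a : R) :
    ∃ k, 1 ≤ ‖c ^ k * a - 1‖ := by
  obtain ⟨k, -, hk⟩ := exists_le_of_sum_le (nonempty_range_iff.mpr hM.ne')
    (f := fun _ ↦ (1 : ℝ)) (by simpa using natCast_le_sum_norm_pow_mul_sub_one hcM hc a)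
  exact ⟨k, hk⟩

theorem conj_pow_eq_inv_commutatorElement_pow_mul {G : Type*} [Group G] {a b : G}
    (h : Commute b ⁅a, b⁆) (k : ℕ) : b ^ k * a * (b ^ k)⁻¹ = ⁅a, b⁆⁻¹ ^ k * a := by
  induction k with
  | zero => simp
  | succ k ih =>
    calc b ^ (k + 1) * a * (b ^ (k + 1))⁻¹ = b * (b ^ k * a * (b ^ k)⁻¹) * b⁻¹ := by group
      _ = ⁅a, b⁆⁻¹ ^ k * (b * a * b⁻¹) := by
        rw [ih, ← mul_assoc, (h.inv_right.pow_right k).eq]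
        group
      _ = ⁅a, b⁆⁻¹ ^ (k + 1) * a := by
        rw [pow_succ, mul_assoc, commutatorElement_def]
        group

namespace Unitary

variable {A : Type*} [NormedRing A] [StarRing A] [CStarRing A]

theorem subset_closedBall : (unitary A : Set A) ⊆ closedBall 0 1 := fun u hu ↦ by
  nontriviality A
  simp [CStarRing.norm_of_mem_unitary hu]

theorem norm_conj_sub_one (u v : unitary A) :
    ‖((u * v * u⁻¹ : unitary A) : A) - 1‖ = ‖(v : A) - 1‖ := by
  rw [← CStarRing.norm_coe_unitary_mul u⁻¹, ← CStarRing.norm_mul_coe_unitary _ u, mul_sub,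
    sub_mul, mul_one, ← Submonoid.coe_mul, ← Submonoid.coe_mul, ← Submonoid.coe_mul,
    inv_mul_cancel, show u⁻¹ * (u * v * u⁻¹) * u = v by group, OneMemClass.coe_one]

theorem norm_commutatorElement_sub_one_le (u v : unitary A) :
    ‖((⁅u, v⁆ : unitary A) : A) - 1‖ ≤ 2 * ‖(u : A) - 1‖ * ‖(v : A) - 1‖ := by
  have h : ((⁅u, v⁆ : unitary A) : A) * ((v * u : unitary A) : A) = u * v := by
    rw [← Submonoid.coe_mul, commutatorElement_def,
      show u * v * u⁻¹ * v⁻¹ * (v * u) = u * v by group, Submonoid.coe_mul]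
  rw [← CStarRing.norm_mul_coe_unitary _ (v * u), sub_mul, h, one_mul, Submonoid.coe_mul,
    show (u : A) * v - v * u = (u - 1) * (v - 1) - (v - 1) * (u - 1) by noncomm_ring]
  calc ‖((u : A) - 1) * (v - 1) - (v - 1) * (u - 1)‖
      ≤ ‖(u : A) - 1‖ * ‖(v : A) - 1‖ + ‖(v : A) - 1‖ * ‖(u : A) - 1‖ :=
        (norm_sub_le _ _).trans (add_le_add (norm_mul_le _ _) (norm_mul_le _ _))
    _ = 2 * ‖(u : A) - 1‖ * ‖(v : A) - 1‖ := by ring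

theorem commute_of_commute_commutatorElement [NormedSpace ℝ A] {u v : unitary A}
    (hu : ‖(u : A) - 1‖ < 1) (hfin : IsOfFinOrder ⁅u, v⁆) (hv : Commute v ⁅u, v⁆) :
    Commute u v := by
  by_contra huv
  set c := ⁅u, v⁆⁻¹ with hc
  have hc1 : (c : A) ≠ 1 := fun h ↦
    huv (commutatorElement_eq_one_iff_commute.mp (inv_eq_one.mp (Subtype.ext h)))
  have hcM : (c : A) ^ orderOf c = 1 := by
    rw [← SubmonoidClass.coe_pow, pow_orderOf_eq_one, OneMemClass.coe_one]
  obtain ⟨k, hk⟩ := exists_one_le_norm_pow_mul_sub_one (orderOf_pos_iff.mpr hfin.inv) hcM hc1 u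
  rw [← SubmonoidClass.coe_pow, ← Submonoid.coe_mul, hc,
    ← conj_pow_eq_inv_commutatorElement_pow_mul hv, norm_conj_sub_one] at hk
  exact hk.not_gt hu

end Unitary

section NearIdentity

variable {A : Type*} [NormedRing A] [StarRing A] [CStarRing A] {G : Type*} [Group G]

def nearIdentity (ρ : G →* unitary A) : Set G := {g | ‖(ρ g : A) - 1‖ < 1 / 2}

variable {ρ : G →* unitary A}

/-- For a non-commuting pair `(a, b)` with `‖ρ b - 1‖` minimal, `⁅a, b⁆ ∈ nearIdentity ρ` is closer
to `1` than `b`, so it commutes with `b`. -/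
theorem commute_of_mem_nearIdentity [NormedSpace ℝ A] [Finite G] (hρ : Function.Injective ρ)
    {a b : G} (ha : a ∈ nearIdentity ρ) (hb : b ∈ nearIdentity ρ) : Commute a b := by
  by_contra hab
  obtain ⟨⟨a, b⟩, ⟨ha, hb, hab⟩, hmin⟩ := Set.exists_min_image
    {p : G × G | p.1 ∈ nearIdentity ρ ∧ p.2 ∈ nearIdentity ρ ∧ ¬Commute p.1 p.2}
    (fun p ↦ ‖(ρ p.2 : A) - 1‖) (Set.toFinite _) ⟨(a, b), ha, hb, hab⟩
  have hb1 : 0 < ‖(ρ b : A) - 1‖ := by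
    refine norm_pos_iff.mpr (sub_ne_zero.mpr fun h ↦ hab ?_)
    rw [(map_eq_one_iff ρ hρ).mp (Subtype.ext h)]
    exact Commute.one_right a
  have hc : ‖(ρ ⁅a, b⁆ : A) - 1‖ < ‖(ρ b : A) - 1‖ := by
    rw [map_commutatorElement]
    calc _ ≤ 2 * ‖(ρ a : A) - 1‖ * ‖(ρ b : A) - 1‖ :=
          Unitary.norm_commutatorElement_sub_one_le _ _
      _ < ‖(ρ b : A) - 1‖ := by
          have : 2 * ‖(ρ a : A) - 1‖ < 1 := by linarith [ha.out]
          nlinarith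
  have hbc : Commute b ⁅a, b⁆ := by
    by_contra h
    exact (hmin (b, ⁅a, b⁆) ⟨hb, hc.trans hb, h⟩).not_gt hc
  refine hab (Commute.of_map hρ (Unitary.commute_of_commute_commutatorElement ?_ ?_ ?_))
  · linarith [ha.out]
  · rw [← map_commutatorElement]
    exact ρ.isOfFinOrder (isOfFinOrder_of_finite _)
  · rw [← map_commutatorElement]
    exact hbc.map ρ

theorem normal_closure_nearIdentity : (Subgroup.closure (nearIdentity ρ)).Normal := by
  suffices h : Group.conjugatesOfSet (nearIdentity ρ) = nearIdentity ρ from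
    h ▸ Subgroup.normalClosure_normal
  refine Set.Subset.antisymm (fun x hx ↦ ?_) Group.subset_conjugatesOfSet
  obtain ⟨a, ha, c, rfl⟩ := by simpa only [Group.mem_conjugatesOfSet_iff, isConj_iff] using hx
  simpa only [nearIdentity, Set.mem_ofPred_eq, map_mul, map_inv, Unitary.norm_conj_sub_one]
    using ha

open scoped IsMulCommutative in
theorem mul_comm_of_mem_closure_nearIdentity [NormedSpace ℝ A] [Finite G]
    (hρ : Function.Injective ρ) (a b : Subgroup.closure (nearIdentity ρ)) : a * b = b * a :=
  have := Subgroup.isMulCommutative_closure fun _ hx _ hy ↦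
    (commute_of_mem_nearIdentity hρ hx hy).eq
  mul_comm a b

theorem le_dist_of_nearIdentity_subset {B : Subgroup G} (hB : nearIdentity ρ ⊆ B) {g h : G}
    (hgh : (g : G ⧸ B) ≠ h) : 1 / 2 ≤ dist (ρ g : A) (ρ h) := by
  by_contra hlt
  refine hgh (QuotientGroup.eq.mpr (hB ?_))
  rw [nearIdentity, Set.mem_ofPred_eq, ← CStarRing.norm_coe_unitary_mul (ρ g), mul_sub, mul_one,
    ← Submonoid.coe_mul, ← map_mul, mul_inv_cancel_left, ← dist_eq_norm, dist_comm]
  exact not_le.mp hlt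

theorem index_le_packingNumber_of_nearIdentity_subset {B : Subgroup G}
    (hB : nearIdentity ρ ⊆ B) :
    (B.index : ℕ∞) ≤ packingNumber (1 / 4) (unitary A : Set A) := by
  set f : G ⧸ B → A := fun q ↦ ρ q.out
  have hfsep {q q' : G ⧸ B} (hne : q ≠ q') : 1 / 2 ≤ dist (f q) (f q') :=
    le_dist_of_nearIdentity_subset hB (by simpa only [QuotientGroup.out_eq'] using hne)
  have hf : Function.Injective f := fun q q' h ↦ by
    by_contra hne
    have := hfsep hne
    rw [h, dist_self] at this
    norm_num at this
  obtain hfin | hinf := finite_or_infinite (G ⧸ B)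
  · calc (B.index : ℕ∞) = ENat.card (G ⧸ B) := (ENat.card_eq_coe_natCard _).symm
      _ ≤ (Set.range f).encard := hf.encard_range
      _ ≤ _ := by
        refine IsSeparated.encard_le_packingNumber (by rintro _ ⟨q, rfl⟩; exact (ρ _).2) ?_
        rintro _ ⟨q, rfl⟩ _ ⟨q', rfl⟩ hne
        rw [edist_nndist, ENNReal.coe_lt_coe, ← NNReal.coe_lt_coe, coe_nndist]
        have := hfsep (ne_of_apply_ne f hne)
        norm_num at this ⊢
        linarith
  · simp [Subgroup.index]

end NearIdentity

theorem TotallyBounded.packingNumber_ne_top {X : Type*} [PseudoEMetricSpace X] {s : Set X}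
    (hs : TotallyBounded s) {ε : ℝ≥0} (hε : ε ≠ 0) : packingNumber ε s ≠ ⊤ := by
  obtain ⟨N, -, hNfin, hN⟩ :=
    exists_finite_isCover_of_totallyBounded (ε := ε / 2) (by simpa using hε) hs
  refine ne_top_of_le_ne_top hNfin.encard_lt_top.ne ?_
  calc packingNumber ε s = packingNumber (2 * (ε / 2)) s := by rw [mul_div_cancel₀ _ two_ne_zero]
    _ ≤ externalCoveringNumber (ε / 2) s := packingNumber_two_mul_le_externalCoveringNumber _ _
    _ ≤ N.encard := hN.externalCoveringNumber_le_encard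

section CStarAlgebra

variable {A : Type*} [CStarAlgebra A] [PartialOrder A] [StarOrderedRing A]

/-- Weyl's unitarian trick: `P = ∑_g (ρ g)⋆ (ρ g)` is strictly positive and `(ρ g)⋆ P (ρ g) = P`,
so conjugating by `√P` makes every `ρ g` unitary. -/
theorem MonoidHom.exists_conj_mem_unitary {G : Type*} [Group G] [Finite G] (ρ : G →* Aˣ) :
    ∃ T : Aˣ, ∀ g, ((T * ρ g * T⁻¹ : Aˣ) : A) ∈ unitary A := by
  have := Fintype.ofFinite G
  set P : A := ∑ g, star (ρ g : A) * ρ g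
  have hP : IsStrictlyPositive P := isStrictlyPositive_one.of_le <| by
    simpa using single_le_sum (f := fun g ↦ star (ρ g : A) * ρ g)
      (fun g _ ↦ star_mul_self_nonneg _) (mem_univ 1)
  have hPinv (g : G) : star (ρ g : A) * P * ρ g = P := by
    simp only [P, mul_sum, sum_mul]
    refine Fintype.sum_equiv (Equiv.mulRight g) _ _ fun x ↦ ?_
    simp only [Equiv.coe_mulRight, map_mul, Units.val_mul, star_mul, mul_assoc]
  obtain ⟨T, hT⟩ := hP.isUnit_cfcSqrt
  have hTT : (T : A) * T = P := hT ▸ CFC.sqrt_mul_sqrt_self P hP.nonneg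
  have hTstar : star T = T := Units.ext <| by
    rw [Units.coe_star, hT, (CFC.sqrt_nonneg P).isSelfAdjoint.star_eq]
  refine ⟨T, fun g ↦ ?_⟩
  rw [(Units.isUnit _).mem_unitary_iff_star_mul_self]
  calc star ((T * ρ g * T⁻¹ : Aˣ) : A) * ((T * ρ g * T⁻¹ : Aˣ) : A)
      = (↑T⁻¹ : A) * (star (ρ g : A) * (T * T) * ρ g) * ↑T⁻¹ := by
        simp only [Units.val_mul, star_mul, ← Units.coe_star, star_inv, hTstar, mul_assoc]
    _ = 1 := by
        rw [hTT, hPinv, ← hTT]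
        simp only [← mul_assoc, Units.inv_mul, one_mul, Units.mul_inv]

theorem CStarAlgebra.isJordanWith_units [ProperSpace A] :
    IsJordanWith (packingNumber (1 / 4) (unitary A : Set A)).toNat Aˣ := by
  intro H _
  obtain ⟨T, hT⟩ := H.subtype.exists_conj_mem_unitary
  let ρ : H →* unitary A :=
    ((Units.coeHom A).comp ((MulAut.conj T).toMonoidHom.comp H.subtype)).codRestrict _ hT
  have hρ : Function.Injective ρ := fun g h hgh ↦
    Subtype.ext (Units.ext (by simpa [ρ] using congrArg Subtype.val hgh))
  have hbdd : TotallyBounded (unitary A : Set A) :=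
    (isCompact_closedBall 0 1).totallyBounded.subset Unitary.subset_closedBall
  refine ⟨_, normal_closure_nearIdentity, mul_comm_of_mem_closure_nearIdentity hρ, ?_⟩
  simpa using ENat.toNat_le_toNat
    (index_le_packingNumber_of_nearIdentity_subset (ρ := ρ) Subgroup.subset_closure)
    (hbdd.packingNumber_ne_top (by norm_num))

end CStarAlgebra

open scoped Matrix.Norms.L2Operator MatrixOrder

open Matrix in
/-- Jordan's theorem: for every `n` there is a constant `J n` such that every finite
subgroup of `GL(n, ℂ)` contains a normal abelian subgroup of index at most `J n`;
in particular `GL(n, ℂ)` is a Jordan group. -/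
theorem jordan_GL_complex :
    ∃ J : ℕ → ℕ, ∀ n : ℕ, 0 < J n ∧ IsJordanWith (J n) (GL (Fin n) ℂ) :=
  ⟨_, fun n ↦ ⟨(CStarAlgebra.isJordanWith_units (A := Matrix (Fin n) (Fin n) ℂ)).pos,
    CStarAlgebra.isJordanWith_units⟩⟩
end

section
/- Let 1 → N → G → Q → 1 be a short exact sequence of groups. If N is Jordan and Q is finite, then G is Jordan. -/
/-!
A finite subgroup `H ≤ G` meets the image of `N` in a subgroup of index at most `|Q|`, which is
isomorphic to a finite subgroup of `N` and so, for a Jordan constant `J` of `N`, contains an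
abelian subgroup of index at most `J`.
Hence `H` has an abelian subgroup `A` of index `k ≤ J |Q|`. Its normal core is abelian and normal
in `H`, of index at most `k!` because `H` acts on the `k` cosets of `A` with kernel the core.
-/

open Function
open scoped Nat

namespace Subgroup

variable {G : Type*} [Group G]

theorem index_normalCore_dvd_factorial_s14 (H : Subgroup G) [H.FiniteIndex] :
    H.normalCore.index ∣ H.index ! := by
  rw [normalCore_eq_ker, index_ker, index_eq_card, ← Nat.card_perm]
  exact card_subgroup_dvd_card _

theorem index_normalCore_le_factorial (H : Subgroup G) [H.FiniteIndex] :
    H.normalCore.index ≤ H.index ! :=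
  Nat.le_of_dvd (Nat.factorial_pos _) H.index_normalCore_dvd_factorial_s14

theorem relIndex_le_index (H K : Subgroup G) [H.FiniteIndex] : H.relIndex K ≤ H.index :=
  relIndex_top_right H ▸
    relIndex_le_of_le_right le_top (relIndex_top_right H ▸ FiniteIndex.index_ne_zero)

end Subgroup

namespace MonoidHom

variable {N G : Type*} [Group N] [Group G]

theorem subgroupComap_injective {f : N →* G} (hf : Injective f) (H : Subgroup G) :
    Injective (f.subgroupComap H) :=
  fun _ _ h => Subtype.ext (hf (congrArg Subtype.val h))

theorem range_subgroupComap (f : N →* G) (H : Subgroup G) :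
    (f.subgroupComap H).range = f.range.subgroupOf H := by
  ext ⟨x, hx⟩
  simp only [mem_range, Subgroup.mem_subgroupOf, Subtype.ext_iff, Subtype.exists]
  exact ⟨fun ⟨a, _, h⟩ => ⟨a, h⟩, fun ⟨a, h⟩ => ⟨a, show f a ∈ H from h ▸ hx, h⟩⟩

end MonoidHom

theorem IsJordanWith.exists_isMulCommutative_index_le {J : ℕ} {N G : Type*} [Group N] [Group G]
    (hN : IsJordanWith J N) {f : N →* G} (hf : Injective f) [f.range.FiniteIndex]
    (H : Subgroup G) [Finite H] :
    ∃ A : Subgroup H, IsMulCommutative A ∧ A.index ≤ J * f.range.index := by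
  have : Finite (H.comap f) := .of_injective _ (f.subgroupComap_injective hf H)
  obtain ⟨A, -, hA, hAJ⟩ := hN (H.comap f) this
  have : IsMulCommutative A := ⟨⟨hA⟩⟩
  refine ⟨A.map (f.subgroupComap H), inferInstance, ?_⟩
  rw [A.index_map_of_injective (f.subgroupComap_injective hf H), f.range_subgroupComap]
  exact Nat.mul_le_mul hAJ (Subgroup.relIndex_le_index _ _)

theorem isJordan_of_shortExact_general {N G Q : Type*} [Group N] [Group G] [Group Q]
    (f : N →* G) (g : G →* Q) (hf : Function.Injective f)
    (hexact : f.range = g.ker) (hN : IsJordanGroup N) (hQ : Finite Q) :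
    IsJordanGroup G := by
  obtain ⟨J, -, hJ⟩ := hN
  have : f.range.FiniteIndex := hexact ▸ inferInstance
  have hindex : f.range.index ≤ Nat.card Q := by
    rw [hexact, Subgroup.index_ker]
    exact Subgroup.card_le_card_group _
  refine ⟨(J * Nat.card Q) !, Nat.factorial_pos _, fun H _ => ?_⟩
  obtain ⟨A, hA, hAJ⟩ := hJ.exists_isMulCommutative_index_le hf H
  refine ⟨A.normalCore, inferInstance, fun a b => ?_, ?_⟩
  · exact Subtype.ext (setLike_mul_comm (A.normalCore_le a.2) (A.normalCore_le b.2))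
  · calc A.normalCore.index ≤ A.index ! := A.index_normalCore_le_factorial
      _ ≤ (J * Nat.card Q) ! := Nat.factorial_le (hAJ.trans (Nat.mul_le_mul_left J hindex))

/-- Let `1 → N → G → Q → 1` be a short exact sequence of groups. If `N` is Jordan and
`Q` is finite, then `G` is Jordan. -/
theorem isJordan_of_shortExact {N G Q : Type*} [Group N] [Group G] [Group Q]
    (f : N →* G) (g : G →* Q) (hf : Function.Injective f) (hg : Function.Surjective g)
    (hexact : f.range = g.ker) (hN : IsJordanGroup N) (hQ : Finite Q) :
    IsJordanGroup G :=
  isJordan_of_shortExact_general f g hf hexact hN hQ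
end

section
/- Let G be a group acting on a set X, and let T ⊂ X be a nonempty finite G-invariant subset. If the kernel K of the induced homomorphism G → Sym(T) is Jordan, then G is Jordan. -/
/-- A group with a normal finite-index Jordan subgroup is Jordan. -/
theorem isJordanGroup_of_normal_finiteIndex {G : Type*} [Group G] (K : Subgroup G)
    [K.Normal] (hfi : K.index ≠ 0) (hK : IsJordanGroup K) : IsJordanGroup G := by
  obtain ⟨J, hJpos, hJ⟩ := hK
  refine ⟨Nat.factorial (J * K.index), Nat.factorial_pos _, ?_⟩
  intro H hH
  haveI : Finite H := hH
  set M : Subgroup K := H.subgroupOf K with hM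
  haveI : Finite M := by
    refine Finite.of_injective (fun m : M => (⟨(m.1 : G), m.2⟩ : H)) ?_
    intro a b hab
    have : ((a : K) : G) = ((b : K) : G) := congrArg (fun h : H => (h : G)) hab
    exact Subtype.ext (Subtype.ext this)
  obtain ⟨A, hAnorm, hAab, hAidx⟩ := hJ M inferInstance
  set A₁ : Subgroup K := A.map M.subtype with hA₁
  set A₂ : Subgroup G := A₁.map K.subtype with hA₂
  have hA₂le : A₂ ≤ H ⊓ K := by
    rw [hA₂, ← Subgroup.subgroupOf_map_subtype]
    exact Subgroup.map_mono (by simpa [hA₁] using Subgroup.map_subtype_le A)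
  have h1 : A₂.relIndex (H ⊓ K) = A.index := by
    rw [← Subgroup.subgroupOf_map_subtype, ← Subgroup.relIndex_comap,
      hA₂, Subgroup.comap_map_eq_self_of_injective K.subtype_injective]
    show (A₁.subgroupOf M).index = A.index
    rw [hA₁, Subgroup.subgroupOf, Subgroup.comap_map_eq_self_of_injective M.subtype_injective]
  have h2 : (H ⊓ K).relIndex H ∣ K.index := by
    rw [Subgroup.inf_relIndex_left]
    exact Subgroup.relIndex_dvd_index_of_normal K H
  have h3 : A₂.relIndex H ≤ J * K.index := by
    rw [← Subgroup.relIndex_mul_relIndex A₂ (H ⊓ K) H hA₂le inf_le_left, h1]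
    exact Nat.mul_le_mul hAidx (Nat.le_of_dvd (Nat.pos_of_ne_zero hfi) h2)
  set B : Subgroup H := A₂.subgroupOf H with hB
  have hBidx : B.index ≤ J * K.index := h3
  have hcomm : ∀ a b : G, a ∈ A₂ → b ∈ A₂ → a * b = b * a := by
    intro a b ha hb
    rw [hA₂, hA₁, Subgroup.map_map] at ha hb
    obtain ⟨x, hx, rfl⟩ := ha
    obtain ⟨y, hy, rfl⟩ := hb
    rw [← map_mul, ← map_mul]
    congr 1
    have := hAab ⟨x, hx⟩ ⟨y, hy⟩
    exact congrArg Subtype.val this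
  refine ⟨B.normalCore, Subgroup.normalCore_normal B, ?_, ?_⟩
  · intro a b
    apply Subtype.ext
    apply Subtype.ext
    exact hcomm _ _ (B.normalCore_le a.2) (B.normalCore_le b.2)
  · have : B.normalCore.index ≤ Nat.factorial B.index := by
      rw [Subgroup.normalCore_eq_ker, Subgroup.index_ker]
      haveI : Finite (H ⧸ B) := Quotient.finite _
      haveI := Fintype.ofFinite (H ⧸ B)
      haveI : DecidableEq (H ⧸ B) := Classical.decEq _
      calc Nat.card (MulAction.toPermHom H (H ⧸ B)).range
          ≤ Nat.card (Equiv.Perm (H ⧸ B)) :=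
            Nat.card_le_card_of_injective _ (MulAction.toPermHom H (H ⧸ B)).range.subtype_injective
        _ = Nat.factorial B.index := by
            rw [Nat.card_eq_fintype_card, Fintype.card_perm, Subgroup.index,
              Nat.card_eq_fintype_card]
    exact this.trans (Nat.factorial_le hBidx)

/-- If a group `G` acts on a set `X`, `T ⊆ X` is a nonempty finite `G`-invariant subset,
and the kernel `K` of the induced homomorphism `G → Sym(T)` — i.e. the pointwise
stabilizer of `T` — is Jordan, then `G` is Jordan. -/
theorem isJordan_of_pointwiseStabilizer {G X : Type*} [Group G] [MulAction G X]
    (T : Finset X) (hT : T.Nonempty) (hinv : ∀ g : G, ∀ x ∈ T, g • x ∈ T)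
    (hK : IsJordanGroup (⨅ x ∈ T, MulAction.stabilizer G x : Subgroup G)) :
    IsJordanGroup G := by
  set K : Subgroup G := ⨅ x ∈ T, MulAction.stabilizer G x with hKdef
  have hmem : ∀ g : G, g ∈ K ↔ ∀ x ∈ T, g • x = x := by
    intro g
    simp [hKdef, Subgroup.mem_iInf, MulAction.mem_stabilizer_iff]
  haveI : K.Normal := by
    constructor
    intro n hn g
    rw [hmem] at hn ⊢
    intro x hx
    have h1 : g⁻¹ • x ∈ T := hinv g⁻¹ x hx
    rw [mul_smul, mul_smul, hn _ h1, smul_inv_smul]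
  -- the homomorphism to Perm T
  let f : G → Equiv.Perm T := fun g =>
    { toFun := fun x => ⟨g • x, hinv g x x.2⟩
      invFun := fun x => ⟨g⁻¹ • x, hinv g⁻¹ x x.2⟩
      left_inv := fun x => Subtype.ext (inv_smul_smul g (x : X))
      right_inv := fun x => Subtype.ext (smul_inv_smul g (x : X)) }
  let φ : G →* Equiv.Perm T :=
    { toFun := f
      map_one' := by
        ext x
        simp [f]
      map_mul' := by
        intro a b
        ext x
        simp [f, mul_smul] }
  have hker : φ.ker ≤ K := by
    intro g hg
    rw [hmem]
    intro x hx
    have := congrArg Subtype.val (Equiv.ext_iff.mp (MonoidHom.mem_ker.mp hg) ⟨x, hx⟩)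
    simpa [f, φ] using this
  have hfi : K.index ≠ 0 := by
    have hdvd : K.index ∣ φ.ker.index := Subgroup.index_dvd_of_le hker
    have : φ.ker.index ≠ 0 := by
      rw [Subgroup.index_ker]
      haveI : Finite φ.range := Subtype.finite
      exact Nat.card_pos.ne'
    exact fun h => this (Nat.eq_zero_of_zero_dvd (h ▸ hdvd))
  exact isJordanGroup_of_normal_finiteIndex K hfi hK
end

section
/- Abstract form of Sect. 2.3–2.4: let G be a group, f : G → A a homomorphism to a group A, and suppose ker(f) is Jordan. If the image f(G) is finite, then G is Jordan. -/
/-! Let `H` be a finite subgroup of `G`. Its intersection `K` with `ker f` has index at most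
`n = |f(G)|` in `H` and is a finite subgroup of `ker f`, so it contains an abelian subgroup of
index at most `J`, hence of index at most `J * n` in `H`. The normal core in `H` of that subgroup
is still abelian, and has index at most `(J * n)!` since `H` acts on the cosets. -/

open Nat

theorem Subgroup.index_normalCore_le_factorial_s19 {G : Type*} [Group G] (H : Subgroup G) :
    H.normalCore.index ≤ H.index ! := by
  rcases eq_or_ne H.index 0 with hH | hH
  · have hdvd : H.index ∣ H.normalCore.index := Subgroup.index_dvd_of_le H.normalCore_le
    rw [hH, zero_dvd_iff] at hdvd
    exact hdvd ▸ Nat.zero_le _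
  have : H.FiniteIndex := ⟨hH⟩
  rw [Subgroup.normalCore_eq_ker, Subgroup.index_ker, Subgroup.index_eq_card, ← Nat.card_perm]
  exact Subgroup.card_le_card_group _

def HasNormalAbelianSubgroupOfIndexLE (J : ℕ) (H : Type*) [Group H] : Prop :=
  ∃ A : Subgroup H, A.Normal ∧ (∀ a b : A, a * b = b * a) ∧ A.index ≤ J

namespace HasNormalAbelianSubgroupOfIndexLE

variable {H : Type*} [Group H]

theorem mono {J J' : ℕ} (h : HasNormalAbelianSubgroupOfIndexLE J H) (hJ : J ≤ J') :
    HasNormalAbelianSubgroupOfIndexLE J' H :=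
  let ⟨A, hA, hcomm, hidx⟩ := h
  ⟨A, hA, hcomm, hidx.trans hJ⟩

theorem of_abelian (C : Subgroup H) (hC : ∀ a b : C, a * b = b * a) :
    HasNormalAbelianSubgroupOfIndexLE C.index ! H :=
  ⟨C.normalCore, C.normalCore_normal,
    fun a b ↦ Subtype.ext (congrArg Subtype.val
      (hC ⟨a, C.normalCore_le a.2⟩ ⟨b, C.normalCore_le b.2⟩) :),
    C.index_normalCore_le_factorial_s19⟩

theorem of_subgroup {J : ℕ} (K : Subgroup H) (hK : HasNormalAbelianSubgroupOfIndexLE J K) :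
    HasNormalAbelianSubgroupOfIndexLE (J * K.index) ! H := by
  obtain ⟨A, -, hcomm, hidx⟩ := hK
  have hcomm' : ∀ a b : A.map K.subtype, a * b = b * a := by
    rintro ⟨_, x, hx, rfl⟩ ⟨_, y, hy, rfl⟩
    exact Subtype.ext (congrArg (fun z : A ↦ ((z : K) : H)) (hcomm ⟨x, hx⟩ ⟨y, hy⟩))
  refine (of_abelian _ hcomm').mono (Nat.factorial_le ?_)
  rw [Subgroup.index_map_subtype]
  exact Nat.mul_le_mul_right _ hidx

end HasNormalAbelianSubgroupOfIndexLE

theorem IsJordanWith.hasNormalAbelianSubgroupOfIndexLE_of_injective {J : ℕ} {K L : Type*}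
    [Group K] [Group L] [Finite K]
    (hL : IsJordanWith J L) {f : K →* L} (hf : Function.Injective f) :
    HasNormalAbelianSubgroupOfIndexLE J K := by
  obtain ⟨A, hA, hcomm, hidx⟩ := hL f.range (.of_surjective _ f.rangeRestrict_surjective)
  let e : K ≃* f.range := MonoidHom.ofInjective hf
  refine ⟨A.comap e.toMonoidHom, hA.comap _, fun a b ↦ ?_, ?_⟩
  · refine Subtype.ext (e.injective ?_)
    simpa only [Subgroup.coe_mul, map_mul] using
      congrArg Subtype.val (hcomm ⟨e a, a.2⟩ ⟨e b, b.2⟩)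
  · rwa [A.index_comap_of_surjective (f := e.toMonoidHom) e.surjective]

theorem MonoidHom.relIndex_ker_le {G A : Type*} [Group G] [Group A] (f : G →* A)
    [Finite f.range] (H : Subgroup G) : f.ker.relIndex H ≤ Nat.card f.range := by
  rw [Subgroup.relIndex_ker]
  exact Subgroup.card_le_of_le (Subgroup.map_le_range f H)

/-- If `f : G → A` is a group homomorphism with Jordan kernel and finite image,
then `G` is Jordan. -/
theorem isJordan_of_ker_finite_image {G A : Type*} [Group G] [Group A] (f : G →* A)
    (hker : IsJordanGroup f.ker) (him : Finite f.range) : IsJordanGroup G := by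
  obtain ⟨J, -, hJordan⟩ := hker
  refine ⟨(J * Nat.card f.range) !, Nat.factorial_pos _, fun H hH ↦ ?_⟩
  let K : Subgroup H := f.ker.subgroupOf H
  let ι : K →* f.ker :=
    (H.subtype.comp K.subtype).codRestrict f.ker fun x ↦ x.2
  have hι : Function.Injective ι := fun x y hxy ↦
    Subtype.ext (Subtype.ext (congrArg Subtype.val hxy :))
  have hK : HasNormalAbelianSubgroupOfIndexLE J K :=
    IsJordanWith.hasNormalAbelianSubgroupOfIndexLE_of_injective hJordan hι
  exact (hK.of_subgroup K).mono (Nat.factorial_le (Nat.mul_le_mul_left J (f.relIndex_ker_le H)))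
end
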